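/- arXiv:2011.07093 — 2 statements merged into one kernel-verified Lean document; each statement's English description precedes it below -/
import Mathlib

section
/- Let G = (N, A) be a directed graph with source s and sink t, let f be a maximum s-t flow with residual graph D_f, and let U be the set of nodes reachable from s in D_f. If a new arc (i,j) with positive capacity is added where both i ∈ U and j ∈ U, then the value of the maximum s-t flow in the augmented network equals the value of the maximum flow in the original network. -/
/-- A capacitated directed network: `A` is the arc relation, `u` the capacities
(zero off the arc set). -/
structure FlowNetwork (V : Type*) where
  A : V → V → Prop
  u : V → V → ℝ
  cap_nonneg : ∀ i j, 0 ≤ u i j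
  cap_zero : ∀ i j, ¬ A i j → u i j = 0

/-- `f` is a feasible `s`-`t` flow in `N`. -/
structure IsFlow {V : Type*} [Fintype V] (N : FlowNetwork V) (s t : V)
    (f : V → V → ℝ) : Prop where
  nonneg : ∀ i j, 0 ≤ f i j
  le_cap : ∀ i j, f i j ≤ N.u i j
  conserve : ∀ v, v ≠ s → v ≠ t → (∑ w, f v w) = (∑ w, f w v)

/-- The value of a flow: the net flow out of the source `s`. -/
noncomputable def flowValue {V : Type*} [Fintype V] (f : V → V → ℝ) (s : V) : ℝ :=
  (∑ w, f s w) - (∑ w, f w s)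

/-- `f` is a maximum `s`-`t` flow in `N`. -/
def IsMaxFlow {V : Type*} [Fintype V] (N : FlowNetwork V) (s t : V)
    (f : V → V → ℝ) : Prop :=
  IsFlow N s t f ∧ ∀ g, IsFlow N s t g → flowValue g s ≤ flowValue f s

/-- Arc of the residual (auxiliary) graph `D_f`: a forward arc where flow is
below capacity, or a backward arc where flow is positive. -/
def ResidualArc {V : Type*} (N : FlowNetwork V) (f : V → V → ℝ) (i j : V) : Prop :=
  (N.A i j ∧ f i j < N.u i j) ∨ (N.A j i ∧ 0 < f j i)

/-- Reachability in the residual graph `D_f`. -/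
def Reaches {V : Type*} (N : FlowNetwork V) (f : V → V → ℝ) (a b : V) : Prop :=
  Relation.ReflTransGen (ResidualArc N f) a b

/-- The network obtained by adding the new arc `(i,j)` with capacity `c`. -/
def addArc {V : Type*} [DecidableEq V] (N : FlowNetwork V) (i j : V) (c : ℝ)
    (hc : 0 ≤ c) : FlowNetwork V where
  A a b := N.A a b ∨ (a = i ∧ b = j)
  u a b := if a = i ∧ b = j then c else N.u a b
  cap_nonneg a b := by
    try dsimp only
    split
    · exact hc
    · exact N.cap_nonneg a b
  cap_zero a b h := by
    try dsimp only
    rw [if_neg (fun hab => h (Or.inr hab))]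
    exact N.cap_zero a b (fun hA => h (Or.inl hA))

/-- The network obtained by simultaneously adding the arcs of `I`, arc `a ∈ I`
getting capacity `c a`. -/
def addArcs {V : Type*} [DecidableEq V] (N : FlowNetwork V) (I : Finset (V × V))
    (c : V × V → ℝ) (hc : ∀ a ∈ I, 0 ≤ c a) : FlowNetwork V where
  A a b := N.A a b ∨ (a, b) ∈ I
  u a b := if (a, b) ∈ I then c (a, b) else N.u a b
  cap_nonneg a b := by
    try dsimp only
    split
    · next h => exact hc _ h
    · exact N.cap_nonneg a b
  cap_zero a b h := by
    try dsimp only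
    rw [if_neg (fun hab => h (Or.inr hab))]
    exact N.cap_zero a b (fun hA => h (Or.inl hA))

/-!
If some residual walk led from `s` to `t`, pushing a small amount of flow along it would
increase the value of `f`; so `U`, the set of nodes reachable from `s` in `D_f`, is an
`s`-`t` cut. No residual arc leaves `U`: arcs out of `U` are saturated and arcs into `U`
carry no flow, so the value of `f` equals the capacity of `U`. The new arc ends in `U`, so
it does not leave `U`, and `U` keeps its capacity in the augmented network. Every flow there
is bounded by that capacity, while `f` stays feasible.
-/

open Filter Topology

theorem eventually_add_mul_mem_Icc {x y u : ℝ} (hx : 0 ≤ x) (hxu : x ≤ u)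
    (hpos : 0 < y → x < u) (hneg : y < 0 → 0 < x) :
    ∀ᶠ ε in 𝓝[>] (0 : ℝ), x + ε * y ∈ Set.Icc 0 u := by
  have hlim : Tendsto (fun ε : ℝ => x + ε * y) (𝓝[>] 0) (𝓝 x) := by
    have : Tendsto (fun ε : ℝ => x + ε * y) (𝓝 0) (𝓝 (x + 0 * y)) :=
      tendsto_const_nhds.add (tendsto_id.mul_const y)
    simpa using this.mono_left nhdsWithin_le_nhds
  rcases lt_trichotomy y 0 with hy | rfl | hy
  · filter_upwards [self_mem_nhdsWithin, hlim.eventually (lt_mem_nhds (hneg hy))]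
      with ε (hε : 0 < ε) hlt
    exact ⟨hlt.le, by nlinarith⟩
  · simp [hx, hxu]
  · filter_upwards [self_mem_nhdsWithin, hlim.eventually (gt_mem_nhds (hpos hy))]
      with ε (hε : 0 < ε) hlt
    exact ⟨by nlinarith, hlt.le⟩

section

variable {V : Type*}

-- Below, `flowValue g v` is used at every vertex `v`, as the net outflow of `g` at `v`.
section NetOutflow

variable [Fintype V]

theorem flowValue_add (g h : V → V → ℝ) (v : V) :
    flowValue (g + h) v = flowValue g v + flowValue h v := by
  simp only [flowValue, Pi.add_apply, Finset.sum_add_distrib]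
  ring

theorem flowValue_smul (ε : ℝ) (h : V → V → ℝ) (v : V) :
    flowValue (ε • h) v = ε * flowValue h v := by
  simp only [flowValue, Pi.smul_apply, smul_eq_mul, ← Finset.mul_sum]
  ring

theorem IsFlow.flowValue_eq_zero {N : FlowNetwork V} {s t : V} {f : V → V → ℝ}
    (hf : IsFlow N s t f) {v : V} (hvs : v ≠ s) (hvt : v ≠ t) : flowValue f v = 0 :=
  sub_eq_zero.2 (hf.conserve v hvs hvt)

end NetOutflow

def IsResidualDirection (N : FlowNetwork V) (f h : V → V → ℝ) : Prop :=
  ∀ a b, (0 < h a b → f a b < N.u a b) ∧ (h a b < 0 → 0 < f a b)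

namespace IsResidualDirection

variable {N : FlowNetwork V} {f h e : V → V → ℝ}

theorem zero : IsResidualDirection N f 0 := fun _ _ =>
  ⟨fun h => absurd h (lt_irrefl 0), fun h => absurd h (lt_irrefl 0)⟩

theorem add (hh : IsResidualDirection N f h) (he : IsResidualDirection N f e) :
    IsResidualDirection N f (h + e) := by
  intro a b
  simp only [Pi.add_apply]
  constructor
  · intro hpos
    rcases lt_or_ge 0 (h a b) with hh' | hh'
    · exact (hh a b).1 hh'
    · exact (he a b).1 (by linarith)
  · intro hneg
    rcases lt_or_ge (h a b) 0 with hh' | hh'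
    · exact (hh a b).2 hh'
    · exact (he a b).2 (by linarith)

end IsResidualDirection

section Augmentation

variable [Fintype V] [DecidableEq V] {N : FlowNetwork V} {f : V → V → ℝ} {s t : V}

theorem ResidualArc.exists_residualDirection {x y : V} (hxy : ResidualArc N f x y) :
    ∃ e, IsResidualDirection N f e ∧
      ∀ v, flowValue e v = (if v = x then 1 else 0) - (if v = y then 1 else 0) := by
  rcases hxy with ⟨-, hlt⟩ | ⟨-, hpos⟩
  · refine ⟨fun a b => if a = x ∧ b = y then 1 else 0, fun a b => ⟨?_, ?_⟩, ?_⟩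
    · intro h
      dsimp only at h
      split_ifs at h with hab
      · obtain ⟨rfl, rfl⟩ := hab
        exact hlt
      · exact absurd h (lt_irrefl 0)
    · intro h
      dsimp only at h
      split_ifs at h <;> norm_num at h
    · intro v
      simp [flowValue, ite_and]
  · refine ⟨fun a b => if a = y ∧ b = x then -1 else 0, fun a b => ⟨?_, ?_⟩, ?_⟩
    · intro h
      dsimp only at h
      split_ifs at h <;> norm_num at h
    · intro h
      dsimp only at h
      split_ifs at h with hab
      · obtain ⟨rfl, rfl⟩ := hab
        exact hpos
      · exact absurd h (lt_irrefl 0)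
    · intro v
      simp only [flowValue, ite_and, Finset.sum_ite_eq', Finset.sum_ite_irrel, Finset.mem_univ,
        if_true, Finset.sum_const_zero]
      split_ifs <;> ring

theorem Reaches.exists_residualDirection {v : V} (hv : Reaches N f s v) :
    ∃ h, IsResidualDirection N f h ∧
      ∀ w, flowValue h w = (if w = s then 1 else 0) - (if w = v then 1 else 0) := by
  induction hv with
  | refl => exact ⟨0, .zero, fun w => by simp [flowValue]⟩
  | tail _ hxy ih =>
    obtain ⟨h, hh, hdiv⟩ := ih
    obtain ⟨e, he, ediv⟩ := hxy.exists_residualDirection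
    exact ⟨h + e, hh.add he, fun w => by rw [flowValue_add, hdiv, ediv]; ring⟩

/-- Augmentation along a residual walk: a small enough multiple of its direction keeps `f`
feasible. -/
theorem IsFlow.exists_flowValue_lt (hst : s ≠ t) (hf : IsFlow N s t f) (hr : Reaches N f s t) :
    ∃ g, IsFlow N s t g ∧ flowValue f s < flowValue g s := by
  obtain ⟨h, hh, hdiv⟩ := hr.exists_residualDirection
  have hbox : ∀ᶠ ε in 𝓝[>] (0 : ℝ), ∀ a b, f a b + ε * h a b ∈ Set.Icc 0 (N.u a b) := by
    simp only [eventually_all]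
    exact fun a b => eventually_add_mul_mem_Icc (hf.nonneg a b) (hf.le_cap a b) (hh a b).1 (hh a b).2
  obtain ⟨ε, hε, hεpos⟩ := (hbox.and self_mem_nhdsWithin).exists
  refine ⟨f + ε • h, ⟨fun a b => (hε a b).1, fun a b => (hε a b).2, fun v hvs hvt => ?_⟩, ?_⟩
  · refine sub_eq_zero.1 ?_
    change flowValue (f + ε • h) v = 0
    rw [flowValue_add, flowValue_smul, hdiv, hf.flowValue_eq_zero hvs hvt, if_neg hvs, if_neg hvt]
    ring
  · rw [flowValue_add, flowValue_smul, hdiv, if_pos rfl, if_neg hst]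
    have : (0 : ℝ) < ε := hεpos
    linarith

theorem IsMaxFlow.not_reaches (hst : s ≠ t) (hf : IsMaxFlow N s t f) : ¬ Reaches N f s t :=
  fun hr =>
    let ⟨g, hg, hlt⟩ := hf.1.exists_flowValue_lt hst hr
    (hf.2 g hg).not_gt hlt

end Augmentation

section Cuts

variable [Fintype V]

theorem IsFlow.saturated_of_not_residualArc {N : FlowNetwork V} {g : V → V → ℝ} {s t : V}
    (hg : IsFlow N s t g) {a b : V}
    (hab : ¬ ResidualArc N g a b) : g a b = N.u a b ∧ g b a = 0 := by
  constructor
  · refine (hg.le_cap a b).eq_of_not_lt fun hlt => ?_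
    by_cases hA : N.A a b
    · exact hab (.inl ⟨hA, hlt⟩)
    · linarith [N.cap_zero a b hA, hg.nonneg a b]
  · refine (hg.nonneg b a).eq_of_not_lt' fun hpos => ?_
    by_cases hA : N.A b a
    · exact hab (.inr ⟨hA, hpos⟩)
    · linarith [N.cap_zero b a hA, hg.le_cap b a]

variable [DecidableEq V]

def cutCapacity (N : FlowNetwork V) (S : Finset V) : ℝ :=
  ∑ a ∈ S, ∑ b ∈ Sᶜ, N.u a b

theorem sum_flowValue_eq_sum_cut (g : V → V → ℝ) (S : Finset V) :
    ∑ v ∈ S, flowValue g v = ∑ a ∈ S, ∑ b ∈ Sᶜ, (g a b - g b a) := by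
  have hinner : ∑ a ∈ S, ∑ b ∈ S, (g a b - g b a) = 0 := by
    simp only [Finset.sum_sub_distrib]
    rw [Finset.sum_comm (s := S) (t := S) (f := fun a b => g a b), sub_self]
  calc ∑ v ∈ S, flowValue g v
      = ∑ a ∈ S, (∑ b ∈ S, (g a b - g b a) + ∑ b ∈ Sᶜ, (g a b - g b a)) := by
        refine Finset.sum_congr rfl fun a _ => ?_
        rw [Finset.sum_add_sum_compl, Finset.sum_sub_distrib]
        rfl
    _ = ∑ a ∈ S, ∑ b ∈ Sᶜ, (g a b - g b a) := by rw [Finset.sum_add_distrib, hinner, zero_add]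

variable {N : FlowNetwork V} {g : V → V → ℝ} {s t : V} {S : Finset V}

theorem IsFlow.flowValue_eq_sum_cut (hg : IsFlow N s t g) (hs : s ∈ S) (ht : t ∉ S) :
    flowValue g s = ∑ a ∈ S, ∑ b ∈ Sᶜ, (g a b - g b a) := by
  rw [← sum_flowValue_eq_sum_cut, Finset.sum_eq_single_of_mem s hs]
  exact fun v hv hvs => hg.flowValue_eq_zero hvs (ne_of_mem_of_not_mem hv ht)

theorem IsFlow.flowValue_le_cutCapacity (hg : IsFlow N s t g) (hs : s ∈ S) (ht : t ∉ S) :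
    flowValue g s ≤ cutCapacity N S := by
  rw [hg.flowValue_eq_sum_cut hs ht]
  refine Finset.sum_le_sum fun a _ => Finset.sum_le_sum fun b _ => ?_
  linarith [hg.le_cap a b, hg.nonneg b a]

theorem IsFlow.flowValue_eq_cutCapacity (hg : IsFlow N s t g) (hs : s ∈ S) (ht : t ∉ S)
    (hS : ∀ a ∈ S, ∀ b ∉ S, ¬ ResidualArc N g a b) : flowValue g s = cutCapacity N S := by
  rw [hg.flowValue_eq_sum_cut hs ht]
  refine Finset.sum_congr rfl fun a ha => Finset.sum_congr rfl fun b hb => ?_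
  obtain ⟨hab, hba⟩ := hg.saturated_of_not_residualArc (hS a ha b (Finset.mem_compl.1 hb))
  rw [hab, hba, sub_zero]

theorem cutCapacity_addArc {i j : V} {c : ℝ} (hc : 0 ≤ c) (hj : j ∈ S) :
    cutCapacity (addArc N i j c hc) S = cutCapacity N S := by
  refine Finset.sum_congr rfl fun a _ => Finset.sum_congr rfl fun b hb => ?_
  refine if_neg ?_
  rintro ⟨-, rfl⟩
  exact Finset.mem_compl.1 hb hj

theorem IsFlow.addArc (hg : IsFlow N s t g) {i j : V} (hij : ¬ N.A i j) {c : ℝ} (hc : 0 ≤ c) :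
    IsFlow (addArc N i j c hc) s t g := by
  refine ⟨hg.nonneg, fun a b => ?_, hg.conserve⟩
  change g a b ≤ if a = i ∧ b = j then c else N.u a b
  split_ifs with hab
  · obtain ⟨rfl, rfl⟩ := hab
    linarith [hg.le_cap a b, N.cap_zero a b hij]
  · exact hg.le_cap a b

end Cuts

end

theorem stmt1_general {V : Type*} [Fintype V] [DecidableEq V]
    (N : FlowNetwork V) (s t : V) (hst : s ≠ t)
    (f : V → V → ℝ) (hf : IsMaxFlow N s t f)
    (i j : V) (hij : ¬ N.A i j) (c : ℝ) (hc : 0 < c)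
    (hj : Reaches N f s j)
    (f' : V → V → ℝ) (hf' : IsMaxFlow (addArc N i j c hc.le) s t f') :
    flowValue f' s = flowValue f s := by
  classical
  set S := Finset.univ.filter (Reaches N f s)
  have hsS : s ∈ S := Finset.mem_filter.2 ⟨Finset.mem_univ s, .refl⟩
  have htS : t ∉ S := by simpa [S] using hf.not_reaches hst
  have hjS : j ∈ S := by simpa [S] using hj
  have hclosed : ∀ a ∈ S, ∀ b ∉ S, ¬ ResidualArc N f a b := by
    simp only [S, Finset.mem_filter, Finset.mem_univ, true_and]
    exact fun a ha b hb hab => hb (ha.tail hab)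
  refine le_antisymm ?_ (hf'.2 f (hf.1.addArc hij hc.le))
  calc flowValue f' s ≤ cutCapacity (addArc N i j c hc.le) S :=
        hf'.1.flowValue_le_cutCapacity hsS htS
    _ = cutCapacity N S := cutCapacity_addArc hc.le hjS
    _ = flowValue f s := (hf.1.flowValue_eq_cutCapacity hsS htS hclosed).symm

/-- adding a single arc `(i,j)` with positive capacity where both
endpoints are reachable from `s` in the residual graph of a maximum flow `f`
does not change the maximum flow value. -/
theorem stmt1 {V : Type*} [Fintype V] [DecidableEq V]
    (N : FlowNetwork V) (s t : V) (hst : s ≠ t)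
    (f : V → V → ℝ) (hf : IsMaxFlow N s t f)
    (i j : V) (hij : ¬ N.A i j) (c : ℝ) (hc : 0 < c)
    (hi : Reaches N f s i) (hj : Reaches N f s j)
    (f' : V → V → ℝ) (hf' : IsMaxFlow (addArc N i j c hc.le) s t f') :
    flowValue f' s = flowValue f s :=
  stmt1_general N s t hst f hf i j hij c hc hj f' hf'
end

section
/- Let Y and D = ⋃_{y∈Y} Z(y) be finite nonempty sets, g : Y × D → ℝ, and define F(y) = max_{z∈Z(y)} g(y,z). Consider an iterative algorithm that at iteration n with visited plans z^1, …, z^n computes y^n minimizing the lower-bound function L_n(y) = max{ g(y, z^k) : k ≤ n, z^k ∈ Z(y) } (with L_n(y) = −∞ if no z^k ∈ Z(y)), sets L = L_n(y^n), computes z^{n+1} ∈ argmax_{z∈Z(y^n)} g(y^n, z), updates U = min(U, F(y^n)), and adds z^{n+1} to the visited set; the algorithm terminates when L ≥ U. Then the algorithm terminates in finitely many iterations with U equal to min_{y∈Y} F(y). -/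
theorem stmt7_aux {ι κ : Type*}
    (Y : Finset ι) (hY : Y.Nonempty)
    (Z : ι → Finset κ) (hZ : ∀ y, (Z y).Nonempty)
    (g : ι → κ → ℝ) (F : ι → ℝ)
    (hF : ∀ y, IsGreatest {v | ∃ z ∈ Z y, v = g y z} (F y))
    (yseq : ℕ → ι) (zseq : ℕ → κ)
    (L : ℕ → ι → EReal)
    (hL : ∀ n y, L n y =
      sSup ((fun k => (g y (zseq k) : EReal)) ''
        {k | 1 ≤ k ∧ k ≤ n ∧ zseq k ∈ Z y}))
    (hymem : ∀ n, 1 ≤ n → yseq n ∈ Y)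
    (hymin : ∀ n, 1 ≤ n → ∀ y ∈ Y, L n (yseq n) ≤ L n y)
    (hzmem : ∀ n, 1 ≤ n → zseq (n + 1) ∈ Z (yseq n))
    (hzmax : ∀ n, 1 ≤ n → g (yseq n) (zseq (n + 1)) = F (yseq n))
    (U : ℕ → ℝ)
    (hU : ∀ n, 1 ≤ n → IsLeast {v | ∃ i, 1 ≤ i ∧ i ≤ n ∧ v = F (yseq i)} (U n))
    (i n : ℕ) (hi : 1 ≤ i) (hin : i < n) (hrep : yseq i = yseq n) :
    ∃ n, 1 ≤ n ∧ ((U n : EReal) ≤ L n (yseq n)) ∧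
      IsLeast {v | ∃ y ∈ Y, v = F y} (U n) := by
  have hn : 1 ≤ n := le_trans hi hin.le
  -- L n y ≤ F y for any y
  have hLF : ∀ y, L n y ≤ (F y : EReal) := by
    intro y
    rw [hL]
    apply sSup_le
    rintro v ⟨k, ⟨hk1, hkn, hkz⟩, rfl⟩
    simp only []
    exact_mod_cast (hF y).2 ⟨zseq k, hkz, rfl⟩
  -- U n ≤ F (yseq i)
  have hUFi : U n ≤ F (yseq i) := (hU n hn).2 ⟨i, hi, hin.le, rfl⟩
  -- F (yseq i) ≤ L n (yseq n)
  have hFiL : (F (yseq i) : EReal) ≤ L n (yseq n) := by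
    rw [hL]
    have hmem : (i + 1) ∈ {k | 1 ≤ k ∧ k ≤ n ∧ zseq k ∈ Z (yseq n)} := by
      refine ⟨by omega, by omega, ?_⟩
      rw [← hrep]; exact hzmem i hi
    have := le_sSup (Set.mem_image_of_mem (fun k => (g (yseq n) (zseq k) : EReal)) hmem)
    calc (F (yseq i) : EReal) = (g (yseq n) (zseq (i + 1)) : EReal) := by
          rw [← hrep, hzmax i hi]
      _ ≤ _ := this
  have hterm : (U n : EReal) ≤ L n (yseq n) :=
    le_trans (by exact_mod_cast hUFi) hFiL
  refine ⟨n, hn, hterm, ?_, ?_⟩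
  · obtain ⟨j, hj1, hjn, hje⟩ := (hU n hn).1
    exact ⟨yseq j, hymem j hj1, hje⟩
  · rintro v ⟨y, hy, rfl⟩
    have : (U n : EReal) ≤ (F y : EReal) :=
      le_trans hterm (le_trans (hymin n hn y hy) (hLF y))
    exact_mod_cast this

/-- the column-and-constraint generation iteration—choosing `y^n`
minimizing the lower-bound function `L n` built from the visited plans
`z^1, …, z^n`, then adding a best response `z^{n+1} ∈ Z(y^n)` and updating the
incumbent upper bound `U n = min_{i ≤ n} F(y^i)`—terminates in finitely many
iterations (the stopping test `L ≥ U` is met at some `n`) with `U n` equal to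
`min_{y ∈ Y} F(y)`. -/
theorem stmt7 {ι κ : Type*}
    (Y : Finset ι) (hY : Y.Nonempty)
    (Z : ι → Finset κ) (hZ : ∀ y, (Z y).Nonempty)
    (g : ι → κ → ℝ) (F : ι → ℝ)
    (hF : ∀ y, IsGreatest {v | ∃ z ∈ Z y, v = g y z} (F y))
    (yseq : ℕ → ι) (zseq : ℕ → κ)
    (L : ℕ → ι → EReal)
    (hL : ∀ n y, L n y =
      sSup ((fun k => (g y (zseq k) : EReal)) ''
        {k | 1 ≤ k ∧ k ≤ n ∧ zseq k ∈ Z y}))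
    (hymem : ∀ n, 1 ≤ n → yseq n ∈ Y)
    (hymin : ∀ n, 1 ≤ n → ∀ y ∈ Y, L n (yseq n) ≤ L n y)
    (hzmem : ∀ n, 1 ≤ n → zseq (n + 1) ∈ Z (yseq n))
    (hzmax : ∀ n, 1 ≤ n → g (yseq n) (zseq (n + 1)) = F (yseq n))
    (U : ℕ → ℝ)
    (hU : ∀ n, 1 ≤ n → IsLeast {v | ∃ i, 1 ≤ i ∧ i ≤ n ∧ v = F (yseq i)} (U n)) :
    ∃ n, 1 ≤ n ∧ ((U n : EReal) ≤ L n (yseq n)) ∧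
      IsLeast {v | ∃ y ∈ Y, v = F y} (U n) := by
  -- pigeonhole: some y-value repeats among iterations 1..Y.card+1
  have hmaps : ∀ k ∈ Finset.Icc 1 (Y.card + 1), yseq k ∈ Y := by
    intro k hk
    exact hymem k (Finset.mem_Icc.mp hk).1
  have hcard : Y.card < (Finset.Icc 1 (Y.card + 1)).card := by
    simp [Nat.card_Icc]
  obtain ⟨a, ha, b, hb, hab, heq⟩ :=
    Finset.exists_ne_map_eq_of_card_lt_of_maps_to hcard hmaps
  -- wlog a < b
  rcases lt_or_gt_of_ne hab with hlt | hlt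
  case _ =>
    exact stmt7_aux Y hY Z hZ g F hF yseq zseq L hL hymem hymin hzmem hzmax U hU
      a b (Finset.mem_Icc.mp ha).1 hlt heq
  case _ =>
    exact stmt7_aux Y hY Z hZ g F hF yseq zseq L hL hymem hymin hzmem hzmax U hU
      b a (Finset.mem_Icc.mp hb).1 hlt heq.symm
end
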